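/- arXiv:1511.00209 — 4 statements merged into one kernel-verified Lean document; each statement's English description precedes it below -/
import Mathlib

section
/- Let A be a finite alphabet and let x ∈ A^ℤ be an eventually periodic sequence. If (i,m) and (j,n) are two anomaly occurrences of x, then the periodic sequences obtained by removing the corresponding blocks coincide: p(x;i,m) = p(x;j,n). -/
open Classical

/-- The shift map `σ` on bi-infinite sequences: `σ(x)_i = x_{i+1}`. -/
def shiftMap {A : Type*} (x : ℤ → A) : ℤ → A := fun i => x (i + 1)

/-- The iterated shift `σ^k` for `k ∈ ℤ`: `σ^k(x)_i = x_{i+k}`. -/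
def shiftZ {A : Type*} (k : ℤ) (x : ℤ → A) : ℤ → A := fun i => x (i + k)

/-- `x` is periodic with period `N > 0`, i.e. `σ^N(x) = x`. -/
def IsPeriodicWith {A : Type*} (x : ℤ → A) (N : ℕ) : Prop :=
  0 < N ∧ ∀ i : ℤ, x (i + N) = x i

/-- `x` is periodic (with some period `N > 0`). -/
def IsPeriodicSeq {A : Type*} (x : ℤ → A) : Prop := ∃ N : ℕ, IsPeriodicWith x N

/-- The sequence `p(x;i,n)` obtained from `x` by removing the block `x_{i+1} ⋯ x_{i+n}`. -/
def removeBlock {A : Type*} (x : ℤ → A) (i : ℤ) (n : ℕ) : ℤ → A :=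
  fun k => if k ≤ i then x k else x (k + n)

/-- `(i,n)` is an anomaly occurrence of `x`: `n > 0` and `p(x;i,n)` is periodic. -/
def IsAnomalyOcc {A : Type*} (x : ℤ → A) (i : ℤ) (n : ℕ) : Prop :=
  0 < n ∧ IsPeriodicSeq (removeBlock x i n)

/-- `x` is eventually periodic: non-periodic, but removing some block leaves a periodic sequence. -/
def EventuallyPeriodic {A : Type*} (x : ℤ → A) : Prop :=
  ¬ IsPeriodicSeq x ∧ ∃ (i : ℤ) (n : ℕ), IsAnomalyOcc x i n

/-- The least period of an eventually periodic sequence `x`: the least period of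
`p(x;i,n)` over anomaly occurrences `(i,n)` of `x`. -/
noncomputable def evLeastPeriod {A : Type*} (x : ℤ → A) : ℕ :=
  sInf {N : ℕ | ∃ (i : ℤ) (n : ℕ), IsAnomalyOcc x i n ∧ IsPeriodicWith (removeBlock x i n) N}

/-- The anomaly size `a(x)`: the minimum of `n` over anomaly occurrences `(i,n)` of `x`. -/
noncomputable def anomalySize {A : Type*} (x : ℤ → A) : ℕ :=
  sInf {n : ℕ | ∃ i : ℤ, IsAnomalyOcc x i n}

/-- The orbit `{σ^k(x) : k ∈ ℤ}` of a bi-infinite sequence. -/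
def seqOrbit {A : Type*} (x : ℤ → A) : Set (ℤ → A) := {y | ∃ k : ℤ, y = shiftZ k x}

/-- The subshift generated by `x`: the closure of its orbit in the product topology. -/
def subshiftGen {A : Type*} [TopologicalSpace A] (x : ℤ → A) : Set (ℤ → A) :=
  closure (seqOrbit x)

/-- Two subshifts are conjugate if there is a homeomorphism between them commuting
with the shift. -/
def Conjugate {A B : Type*} [TopologicalSpace A] [TopologicalSpace B]
    (X : Set (ℤ → A)) (Y : Set (ℤ → B)) : Prop :=
  ∃ φ : X ≃ₜ Y, ∀ (u : ℤ → A) (hu : u ∈ X) (hu' : shiftMap u ∈ X),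
    ((φ ⟨shiftMap u, hu'⟩ : Y) : ℤ → B) = shiftMap ((φ ⟨u, hu⟩ : Y) : ℤ → B)

/-- The relation generating the suspension: `(x,s) ∼ (σ^n(x), s - n)`. -/
def SuspRel {A : Type*} (X : Set (ℤ → A)) : (X × ℝ) → (X × ℝ) → Prop :=
  fun p q => ∃ n : ℤ, (q.1 : ℤ → A) = shiftZ n (p.1 : ℤ → A) ∧ q.2 = p.2 - n

/-- The suspension `ΣX` of a subshift `X`. -/
def Susp {A : Type*} [TopologicalSpace A] (X : Set (ℤ → A)) : Type _ :=
  Quot (SuspRel X)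

instance {A : Type*} [TopologicalSpace A] (X : Set (ℤ → A)) : TopologicalSpace (Susp X) :=
  instTopologicalSpaceQuot

/-- The suspension flow `φ_t [x,s] = [x, s+t]`. -/
def suspFlow {A : Type*} [TopologicalSpace A] (X : Set (ℤ → A)) (t : ℝ) :
    Susp X → Susp X :=
  Quot.lift (fun p => Quot.mk _ (p.1, p.2 + t)) (by
    rintro p r ⟨n, h1, h2⟩
    exact Quot.sound ⟨n, h1, by rw [h2]; ring⟩)

/-- Two subshifts are flow equivalent if there is a homeomorphism of their suspensions
taking flow lines to flow lines in an orientation-preserving way. -/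
def FlowEquiv {A B : Type*} [TopologicalSpace A] [TopologicalSpace B]
    (X : Set (ℤ → A)) (Y : Set (ℤ → B)) : Prop :=
  ∃ h : Susp X ≃ₜ Susp Y, ∀ u : Susp X, ∃ τ : ℝ → ℝ,
    StrictMono τ ∧ Function.Bijective τ ∧ τ 0 = 0 ∧
      ∀ t : ℝ, h (suspFlow X t u) = suspFlow Y (τ t) (h u)

/-- Cell lengths `z_n` for the type-`S` skew Sturmian sequence `S(0, q/p)`, with `β = p/q`. -/
noncomputable def cellLenS (p q : ℤ) (n : ℤ) : ℕ :=
  if n < 0 then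
    ({k : ℤ | (n : ℚ) < (k : ℚ) * ((p : ℚ) / (q : ℚ)) ∧
        (k : ℚ) * ((p : ℚ) / (q : ℚ)) ≤ (n : ℚ) + 1}).ncard
  else if n = 0 then
    ({k : ℤ | 0 < (k : ℚ) * ((p : ℚ) / (q : ℚ)) ∧
        (k : ℚ) * ((p : ℚ) / (q : ℚ)) < 1}).ncard
  else
    ({k : ℤ | (n : ℚ) ≤ (k : ℚ) * ((p : ℚ) / (q : ℚ)) ∧
        (k : ℚ) * ((p : ℚ) / (q : ℚ)) < (n : ℚ) + 1}).ncard

/-- Cell lengths `z′_n` for the type-`S′` skew Sturmian sequence `S′(0, q/p)`, with `β = p/q`. -/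
noncomputable def cellLenS' (p q : ℤ) (n : ℤ) : ℕ :=
  if n < 0 then
    ({k : ℤ | (n : ℚ) ≤ (k : ℚ) * ((p : ℚ) / (q : ℚ)) ∧
        (k : ℚ) * ((p : ℚ) / (q : ℚ)) < (n : ℚ) + 1}).ncard
  else if n = 0 then
    ({k : ℤ | 0 ≤ (k : ℚ) * ((p : ℚ) / (q : ℚ)) ∧
        (k : ℚ) * ((p : ℚ) / (q : ℚ)) ≤ 1}).ncard
  else
    ({k : ℤ | (n : ℚ) < (k : ℚ) * ((p : ℚ) / (q : ℚ)) ∧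
        (k : ℚ) * ((p : ℚ) / (q : ℚ)) ≤ (n : ℚ) + 1}).ncard

/-- The position `L_n` of the leading `1` of the cell `B_n`. -/
noncomputable def cellStart (z : ℤ → ℕ) (n : ℤ) : ℤ :=
  if 0 ≤ n then n + ∑ j ∈ Finset.Ico (0 : ℤ) n, (z j : ℤ)
  else n - ∑ j ∈ Finset.Ico n (0 : ℤ), (z j : ℤ)

/-- The `{0,1}`-sequence determined by cell lengths `z`: a `1` at each position `L_n`
and `0` elsewhere. -/
noncomputable def seqOfCells (z : ℤ → ℕ) : ℤ → Fin 2 :=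
  fun i => if ∃ n : ℤ, i = cellStart z n then 1 else 0

/-- The type-`S` skew Sturmian sequence `S(0, q/p)`. -/
noncomputable def sturmS (p q : ℤ) : ℤ → Fin 2 := seqOfCells (cellLenS p q)

/-- The type-`S′` skew Sturmian sequence `S′(0, q/p)`. -/
noncomputable def sturmS' (p q : ℤ) : ℤ → Fin 2 := seqOfCells (cellLenS' p q)

/-! Both `p(x;i,m)` and `p(x;j,n)` agree with `x` left of `min i j`, and two periodic sequences
that agree on a left half-line coincide: move any position into it by a multiple of a common
period. -/

theorem Function.Periodic.eq_of_forall_le_eq {A : Type*} {f g : ℤ → A} {c d : ℤ}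
    (hf : Function.Periodic f c) (hg : Function.Periodic g d) (hc : 0 < c) (hd : 0 < d)
    (a : ℤ) (hfg : ∀ k ≤ a, f k = g k) : f = g := by
  funext k
  have hcd : Function.Periodic f (c * d) := mul_comm d c ▸ hf.int_mul d
  have hdc : Function.Periodic g (c * d) := hg.int_mul c
  have hfar : k - |k - a| * (c * d) ≤ a := by
    nlinarith [le_abs_self (k - a), abs_nonneg (k - a), mul_pos hc hd]
  calc f k = f (k - |k - a| * (c * d)) := (hcd.sub_int_mul_eq _).symm
    _ = g (k - |k - a| * (c * d)) := hfg _ hfar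
    _ = g k := hdc.sub_int_mul_eq _

theorem IsPeriodicWith.periodic {A : Type*} {y : ℤ → A} {N : ℕ} (h : IsPeriodicWith y N) :
    Function.Periodic y N :=
  h.2

theorem removeBlock_of_le {A : Type*} (x : ℤ → A) {i k : ℤ} (n : ℕ) (hk : k ≤ i) :
    removeBlock x i n k = x k :=
  if_pos hk

theorem stmt_0_general {A : Type*} (x : ℤ → A)
    (i j : ℤ) (m n : ℕ) (him : IsAnomalyOcc x i m) (hjn : IsAnomalyOcc x j n) :
    removeBlock x i m = removeBlock x j n := by
  obtain ⟨M, hM⟩ := him.2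
  obtain ⟨N, hN⟩ := hjn.2
  refine hM.periodic.eq_of_forall_le_eq hN.periodic (by exact_mod_cast hM.1)
    (by exact_mod_cast hN.1) (min i j) fun k hk => ?_
  rw [removeBlock_of_le x m (hk.trans (min_le_left i j)),
    removeBlock_of_le x n (hk.trans (min_le_right i j))]

/-- If `(i,m)` and `(j,n)` are anomaly occurrences of an eventually periodic
sequence `x`, then `p(x;i,m) = p(x;j,n)`. -/
theorem stmt_0 {A : Type*} [Fintype A] (x : ℤ → A) (hx : EventuallyPeriodic x)
    (i j : ℤ) (m n : ℕ) (him : IsAnomalyOcc x i m) (hjn : IsAnomalyOcc x j n) :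
    removeBlock x i m = removeBlock x j n :=
  stmt_0_general x i j m n him hjn
end

section
/- Let A be a finite alphabet and let x ∈ A^ℤ be an eventually periodic sequence with least period N. If (i,m) and (j,n) are two anomaly occurrences of x, then m ≡ n (mod N). -/
open Classical

section Aux


/-
All anomaly occurrences of `x` leave the same periodic sequence `w`, since the sequences
`p(x;i,m)` agree with `x` to the left of the removed block and a periodic sequence on `ℤ`
is determined by any left half-line. Comparing `p(x;i,m)` and `p(x;j,n)` far to the right
shows that `n - m` is a period of `w`, and every period of `w` is a multiple of its least
period `N`.
-/

open Function

namespace Function.Periodic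

variable {α : Type*} {y z : ℤ → α} {c : ℤ}

theorem eq_of_forall_ge_eq (hy : Periodic y c) (hz : Periodic z c) (hc : 0 < c) (K : ℤ)
    (h : ∀ k ≥ K, y k = z k) : y = z := by
  funext k
  have ht : K ≤ k + max 0 (K - k) * c := by
    nlinarith [le_max_left 0 (K - k), le_max_right 0 (K - k)]
  have hyk := hy.zsmul (max 0 (K - k)) k
  have hzk := hz.zsmul (max 0 (K - k)) k
  rw [smul_eq_mul] at hyk hzk
  rw [← hyk, h _ ht, hzk]

theorem eq_of_forall_le_eq_s1 (hy : Periodic y c) (hz : Periodic z c) (hc : 0 < c) (K : ℤ)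
    (h : ∀ k ≤ K, y k = z k) : y = z := by
  funext k
  have ht : k + -max 0 (k - K) * c ≤ K := by
    nlinarith [le_max_left 0 (k - K), le_max_right 0 (k - K)]
  have hyk := hy.zsmul (-max 0 (k - K)) k
  have hzk := hz.zsmul (-max 0 (k - K)) k
  rw [smul_eq_mul] at hyk hzk
  rw [← hyk, h _ ht, hzk]

end Function.Periodic

section

variable {α : Type*}

theorem IsPeriodicWith.periodic_s1 {y : ℤ → α} {P : ℕ} (hy : IsPeriodicWith y P) :
    Periodic y (P : ℤ) :=
  hy.2

theorem IsPeriodicSeq.exists_common_period {y z : ℤ → α} (hy : IsPeriodicSeq y)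
    (hz : IsPeriodicSeq z) : ∃ c : ℤ, 0 < c ∧ Periodic y c ∧ Periodic z c := by
  obtain ⟨P, hP0, hP⟩ := hy
  obtain ⟨Q, hQ0, hQ⟩ := hz
  refine ⟨Q * P, by positivity, ?_, ?_⟩
  · simpa using (IsPeriodicWith.periodic_s1 ⟨hP0, hP⟩).nat_mul Q
  · rw [mul_comm]
    simpa using (IsPeriodicWith.periodic_s1 ⟨hQ0, hQ⟩).nat_mul P

theorem IsPeriodicWith.dvd_of_periodic {w : ℤ → α} {N : ℕ} (hN : IsPeriodicWith w N)
    (hmin : ∀ P, IsPeriodicWith w P → N ≤ P) {d : ℤ} (hd : Periodic w d) : (N : ℤ) ∣ d := by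
  have hN0 : (0 : ℤ) < N := by exact_mod_cast hN.1
  have hr : Periodic w (d % N) := by
    rw [Int.emod_def, mul_comm]
    exact hd.sub_period (hN.periodic_s1.int_mul _)
  by_contra hndvd
  have hr0 : 0 < d % N :=
    lt_of_le_of_ne (Int.emod_nonneg d hN0.ne') (Ne.symm (mt Int.dvd_of_emod_eq_zero hndvd))
  have hle := hmin (d % N).toNat ⟨by omega, by rwa [Int.toNat_of_nonneg hr0.le]⟩
  have := Int.emod_lt_of_pos d hN0
  omega

variable {x : ℤ → α}

theorem removeBlock_eq_of_isPeriodicSeq {i j : ℤ} {m n : ℕ}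
    (hm : IsPeriodicSeq (removeBlock x i m)) (hn : IsPeriodicSeq (removeBlock x j n)) :
    removeBlock x i m = removeBlock x j n := by
  obtain ⟨c, hc, hyc, hzc⟩ := hm.exists_common_period hn
  refine hyc.eq_of_forall_le_eq_s1 hzc hc (min i j) fun k hk => ?_
  simp only [removeBlock, if_pos (hk.trans (min_le_left i j)), if_pos (hk.trans (min_le_right i j))]

theorem periodic_sub_of_removeBlock_eq {i j : ℤ} {m n : ℕ}
    (hm : IsPeriodicSeq (removeBlock x i m)) (h : removeBlock x i m = removeBlock x j n) :
    Periodic (removeBlock x i m) ((n : ℤ) - m) := by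
  set w := removeBlock x i m
  obtain ⟨P, hP0, hP⟩ := hm
  have hshift : Periodic (fun k => w (k + (n - m))) P := fun k => by
    simp only [add_right_comm k (P : ℤ), hP _]
  refine congrFun <| hshift.eq_of_forall_ge_eq hP (by omega) (max i j + m + 1) fun k hk => ?_
  conv_rhs => rw [h]
  simp only [w, removeBlock]
  rw [if_neg (by omega), if_neg (by omega)]
  congr 1
  omega

end

theorem stmt_1_general {A : Type*} (x : ℤ → A)
    (N : ℕ) (hN : evLeastPeriod x = N)
    (i j : ℤ) (m n : ℕ) (him : IsAnomalyOcc x i m) (hjn : IsAnomalyOcc x j n) :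
    m ≡ n [MOD N] := by
  have hNmem : N ∈ {N : ℕ | ∃ (i : ℤ) (n : ℕ), IsAnomalyOcc x i n ∧
      IsPeriodicWith (removeBlock x i n) N} := by
    obtain ⟨P, hP⟩ := him.2
    exact hN ▸ Nat.sInf_mem ⟨P, i, m, him, hP⟩
  obtain ⟨i₁, n₁, hocc₁, hper₁⟩ := hNmem
  rw [removeBlock_eq_of_isPeriodicSeq hocc₁.2 him.2] at hper₁
  have hmin : ∀ P, IsPeriodicWith (removeBlock x i m) P → N ≤ P :=
    fun P hP => hN ▸ Nat.sInf_le ⟨i, m, him, hP⟩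
  exact Nat.modEq_iff_dvd.mpr <| hper₁.dvd_of_periodic hmin <|
    periodic_sub_of_removeBlock_eq him.2 (removeBlock_eq_of_isPeriodicSeq him.2 hjn.2)

/-- If `x` is eventually periodic with least period `N` and `(i,m)`, `(j,n)`
are anomaly occurrences of `x`, then `m ≡ n (mod N)`. -/
theorem stmt_1 {A : Type*} [Fintype A] (x : ℤ → A) (hx : EventuallyPeriodic x)
    (N : ℕ) (hN : evLeastPeriod x = N)
    (i j : ℤ) (m n : ℕ) (him : IsAnomalyOcc x i m) (hjn : IsAnomalyOcc x j n) :
    m ≡ n [MOD N] :=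
  stmt_1_general x N hN i j m n him hjn
end Aux
end

section
/- Let A and B be finite alphabets, let x ∈ A^ℤ and y ∈ B^ℤ be eventually periodic sequences with least periods N and M respectively, and let X and Y be the subshifts they generate. If X and Y are conjugate, then M = N and a(x) ≡ a(y) (mod N). -/
open Classical

/-!
The subshift generated by `x` consists of the shifts of `x` and of its periodic part `p`, what
remains after removing an anomaly of length `n`: `p` agrees with `x` on a left half-line and
`σ⁻ⁿ p` agrees with `x` on a right half-line. A conjugacy commutes with all shifts, so it sends the
periodic points `σᶜ p` to periodic points `σᵇ q`, which makes the least periods divide each other,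
and it sends `x` to some `σᵃ y`. Being a sliding block code, it preserves agreement on half-lines,
and comparing both ends pins the anomaly lengths down modulo the period.
-/

open Filter Function Topology

section Shift
variable {A : Type*}

@[simp] lemma shiftZ_apply (k : ℤ) (u : ℤ → A) (i : ℤ) : shiftZ k u i = u (i + k) := rfl

lemma shiftZ_zero (u : ℤ → A) : shiftZ 0 u = u := by
  funext i; simp

lemma shiftZ_shiftZ (a b : ℤ) (u : ℤ → A) : shiftZ a (shiftZ b u) = shiftZ (a + b) u := by
  funext i; simp [add_assoc]

lemma shiftMap_eq_shiftZ_one (u : ℤ → A) : shiftMap u = shiftZ 1 u := rfl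

lemma shiftZ_injective (k : ℤ) : Injective (shiftZ k : (ℤ → A) → ℤ → A) := fun u v h => by
  rw [← shiftZ_zero u, ← shiftZ_zero v, ← neg_add_cancel k, ← shiftZ_shiftZ, ← shiftZ_shiftZ, h]

lemma shiftZ_eq_self_iff {u : ℤ → A} {d : ℤ} : shiftZ d u = u ↔ Periodic u d :=
  funext_iff

lemma shiftZ_eq_shiftZ_iff {u : ℤ → A} {a b : ℤ} :
    shiftZ a u = shiftZ b u ↔ Periodic u (b - a) := by
  rw [← shiftZ_eq_self_iff]
  constructor
  · intro h
    rw [sub_eq_neg_add, ← shiftZ_shiftZ, ← h, shiftZ_shiftZ, neg_add_cancel, shiftZ_zero]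
  · intro h
    conv_lhs => rw [← h]
    rw [shiftZ_shiftZ, add_sub_cancel]

lemma periodic_shiftZ_iff {u : ℤ → A} {k d : ℤ} : Periodic (shiftZ k u) d ↔ Periodic u d := by
  refine ⟨fun h => ?_, fun h => h.add_const k⟩
  simpa [shiftZ_shiftZ] using h.add_const (-k)

lemma isPeriodicSeq_shiftZ_iff {u : ℤ → A} {k : ℤ} :
    IsPeriodicSeq (shiftZ k u) ↔ IsPeriodicSeq u :=
  exists_congr fun _ => and_congr_right fun _ => periodic_shiftZ_iff

lemma Filter.EventuallyEq.shiftZ {l : Filter ℤ} {u v : ℤ → A} (k : ℤ)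
    (hl : Tendsto (· + k) l l) (h : u =ᶠ[l] v) : shiftZ k u =ᶠ[l] shiftZ k v :=
  h.comp_tendsto hl

def IsShiftInvariant (X : Set (ℤ → A)) : Prop := ∀ (k : ℤ), ∀ u ∈ X, shiftZ k u ∈ X

end Shift

section Period
variable {A B : Type*} {u : ℤ → A} {v : ℤ → B}

noncomputable def leastPer (u : ℤ → A) : ℕ := sInf {N | IsPeriodicWith u N}

lemma IsPeriodicSeq.isPeriodicWith_leastPer (h : IsPeriodicSeq u) :
    IsPeriodicWith u (leastPer u) :=
  Nat.sInf_mem h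

lemma IsPeriodicSeq.leastPer_dvd (h : IsPeriodicSeq u) {d : ℤ} (hd : Periodic u d) :
    (leastPer u : ℤ) ∣ d := by
  obtain ⟨hpos, hper : Periodic u (leastPer u)⟩ := h.isPeriodicWith_leastPer
  set L := leastPer u
  -- Bézout: `gcd L d` is itself a positive period, so minimality of `L` forces it to be `L`.
  have hgcd : Periodic u (Int.gcd L d) := by
    rw [Int.gcd_eq_gcd_ab, mul_comm (L : ℤ), mul_comm d]
    exact (hper.int_mul _).add_period (hd.int_mul _)
  have hgcd_pos : 0 < Int.gcd L d := Int.gcd_pos_of_ne_zero_left _ (by omega)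
  have hL_le : L ≤ Int.gcd L d := Nat.sInf_le ⟨hgcd_pos, hgcd⟩
  have hle_L : Int.gcd L d ≤ L := Nat.le_of_dvd hpos (Int.gcd_dvd_natAbs_left ..)
  rw [← le_antisymm hle_L hL_le]
  exact Int.gcd_dvd_right ..

lemma IsPeriodicSeq.exists_common_period_s2 (hu : IsPeriodicSeq u) (hv : IsPeriodicSeq v) :
    ∃ P : ℕ, 0 < P ∧ Periodic u P ∧ Periodic v P := by
  obtain ⟨N, hN, hNu : Periodic u N⟩ := hu
  obtain ⟨M, hM, hMv : Periodic v M⟩ := hv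
  refine ⟨N * M, by positivity, ?_, ?_⟩
  · simpa [mul_comm] using hNu.nat_mul M
  · simpa using hMv.nat_mul N

lemma tendsto_sub_mul_atBot (k : ℤ) {P : ℕ} (hP : 0 < P) :
    Tendsto (fun t : ℕ => k - t * (P : ℤ)) atTop atBot :=
  tendsto_atTop_atBot.2 fun b => ⟨(k - b).toNat, fun t ht => by
    nlinarith [Int.self_le_toNat (k - b)]⟩

lemma tendsto_add_mul_atTop (k : ℤ) {P : ℕ} (hP : 0 < P) :
    Tendsto (fun t : ℕ => k + t * (P : ℤ)) atTop atTop :=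
  tendsto_atTop_atTop.2 fun b => ⟨(b - k).toNat, fun t ht => by
    nlinarith [Int.self_le_toNat (b - k)]⟩

lemma IsPeriodicSeq.eq_of_eventuallyEq_atBot {v : ℤ → A} (hu : IsPeriodicSeq u)
    (hv : IsPeriodicSeq v) (h : u =ᶠ[atBot] v) : u = v := by
  obtain ⟨P, hP, hPu, hPv⟩ := hu.exists_common_period_s2 hv
  funext k
  obtain ⟨t, ht⟩ := (h.comp_tendsto (tendsto_sub_mul_atBot k hP)).exists
  rw [← hPu.sub_nat_mul_eq t, ← hPv.sub_nat_mul_eq t]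
  exact ht

lemma IsPeriodicSeq.eq_of_eventuallyEq_atTop {v : ℤ → A} (hu : IsPeriodicSeq u)
    (hv : IsPeriodicSeq v) (h : u =ᶠ[atTop] v) : u = v := by
  obtain ⟨P, hP, hPu, hPv⟩ := hu.exists_common_period_s2 hv
  funext k
  obtain ⟨t, ht⟩ := (h.comp_tendsto (tendsto_add_mul_atTop k hP)).exists
  rw [← hPu.nat_mul t k, ← hPv.nat_mul t k]
  exact ht

lemma IsPeriodicSeq.finite_range_shiftZ (h : IsPeriodicSeq u) :
    (Set.range fun c : ℤ => shiftZ c u).Finite := by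
  obtain ⟨P, hP, hPu : Periodic u P⟩ := h
  have hper : Periodic (fun c : ℤ => shiftZ c u) P := fun c => by
    funext i; simpa [add_assoc] using hPu (i + c)
  refine ((Set.finite_Ico 0 (P : ℤ)).image fun c => shiftZ c u).subset ?_
  rintro _ ⟨c, rfl⟩
  obtain ⟨d, hd, hcd⟩ := hper.exists_mem_Ico₀ (by exact_mod_cast hP) c
  exact ⟨d, hd, hcd.symm⟩

end Period

section RemoveBlock
variable {A : Type*} {x : ℤ → A} {i i' : ℤ} {n n' : ℕ}

lemma removeBlock_eventuallyEq_atBot : removeBlock x i n =ᶠ[atBot] x :=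
  eventually_atBot.2 ⟨i, fun _ hk => if_pos hk⟩

lemma shiftZ_removeBlock_eventuallyEq_atTop : shiftZ (-n) (removeBlock x i n) =ᶠ[atTop] x :=
  eventually_atTop.2 ⟨i + n + 1, fun k hk => by simp [removeBlock]; omega⟩

lemma IsAnomalyOcc.removeBlock_eq (h : IsAnomalyOcc x i n) (h' : IsAnomalyOcc x i' n') :
    removeBlock x i n = removeBlock x i' n' :=
  h.2.eq_of_eventuallyEq_atBot h'.2
    (removeBlock_eventuallyEq_atBot.trans removeBlock_eventuallyEq_atBot.symm)

lemma IsAnomalyOcc.evLeastPeriod_eq (h : IsAnomalyOcc x i n) :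
    evLeastPeriod x = leastPer (removeBlock x i n) := by
  unfold evLeastPeriod leastPer
  congr 1
  ext N
  constructor
  · rintro ⟨i', n', h', hN⟩
    rwa [h.removeBlock_eq h']
  · exact fun hN => ⟨i, n, h, hN⟩

lemma EventuallyPeriodic.exists_isAnomalyOcc_anomalySize (hx : EventuallyPeriodic x) :
    ∃ i, IsAnomalyOcc x i (anomalySize x) :=
  let ⟨i, n, h⟩ := hx.2
  Nat.sInf_mem (s := {n | ∃ i, IsAnomalyOcc x i n}) ⟨n, i, h⟩

end RemoveBlock

section Cylinder
variable {A B : Type*}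

def cylinder (z : ℤ → A) (m : ℕ) : Set (ℤ → A) := (Set.Icc (-(m : ℤ)) m).pi fun l => {z l}

lemma mem_cylinder {w z : ℤ → A} {m : ℕ} :
    w ∈ cylinder z m ↔ ∀ l : ℤ, -(m : ℤ) ≤ l → l ≤ m → w l = z l := by
  simp [cylinder, Set.mem_pi]

lemma mem_cylinder_self (z : ℤ → A) (m : ℕ) : z ∈ cylinder z m :=
  mem_cylinder.2 fun _ _ _ => rfl

lemma cylinder_anti (z : ℤ → A) : Antitone (cylinder z) := fun _ _ hmr _ hw =>
  mem_cylinder.2 fun l hl hl' => mem_cylinder.1 hw l (by omega) (by omega)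

lemma cylinder_eq_of_mem {w z : ℤ → A} {m : ℕ} (h : w ∈ cylinder z m) :
    cylinder w m = cylinder z m := by
  ext v
  simp only [mem_cylinder] at h ⊢
  exact forall_congr' fun l => imp_congr_right fun hl => imp_congr_right fun hl' => by
    rw [h l hl hl']

variable [TopologicalSpace A]

lemma exists_cylinder_subset {z : ℤ → A} {U : Set (ℤ → A)} (hU : U ∈ 𝓝 z) :
    ∃ m : ℕ, cylinder z m ⊆ U := by
  rw [nhds_pi, Filter.mem_pi] at hU
  obtain ⟨I, hI, t, ht, hsub⟩ := hU
  obtain ⟨m, hm⟩ := (hI.image Int.natAbs).bddAbove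
  refine ⟨m, fun w hw => hsub fun l hl => ?_⟩
  have hlm : l.natAbs ≤ m := hm ⟨l, hl, rfl⟩
  rw [mem_cylinder.1 hw l (by omega) (by omega)]
  exact mem_of_mem_nhds (ht l)

variable [DiscreteTopology A]

lemma isOpen_cylinder (z : ℤ → A) (m : ℕ) : IsOpen (cylinder z m) :=
  isOpen_set_pi (Set.finite_Icc _ _) fun _ _ => isOpen_discrete _

lemma Continuous.exists_eq_of_mem_cylinder [TopologicalSpace B] [DiscreteTopology B]
    {X : Set (ℤ → A)} (hX : IsCompact X) {Φ : X → B} (hΦ : Continuous Φ) :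
    ∃ r : ℕ, ∀ u v : X, (v : ℤ → A) ∈ cylinder u r → Φ v = Φ u := by
  have : CompactSpace X := isCompact_iff_compactSpace.1 hX
  let O : ℕ → Set X := fun r => {u | ∀ v : X, (v : ℤ → A) ∈ cylinder u r → Φ v = Φ u}
  have hO_open (r : ℕ) : IsOpen (O r) := by
    refine isOpen_iff_forall_mem_open.2 fun u hu => ⟨Subtype.val ⁻¹' cylinder u r, ?_,
      (isOpen_cylinder _ _).preimage continuous_subtype_val, mem_cylinder_self _ _⟩
    intro u' hu' v hv
    rw [cylinder_eq_of_mem hu'] at hv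
    rw [hu v hv, hu u' hu']
  have hO_mono : Monotone O := fun r s hrs u hu v hv => hu v (cylinder_anti _ hrs hv)
  have hO_cover : Set.univ ⊆ ⋃ r, O r := by
    intro u _
    have hfiber : Φ ⁻¹' {Φ u} ∈ 𝓝 u :=
      hΦ.continuousAt.preimage_mem_nhds ((isOpen_discrete _).mem_nhds rfl)
    obtain ⟨U, hU, hUsub⟩ := (mem_nhds_subtype _ _ _).1 hfiber
    obtain ⟨r, hr⟩ := exists_cylinder_subset hU
    exact Set.mem_iUnion.2 ⟨r, fun v hv => hUsub (hr hv)⟩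
  obtain ⟨r, hr⟩ := isCompact_univ.elim_directed_cover O hO_open hO_cover hO_mono.directed_le
  exact ⟨r, fun u v => hr (Set.mem_univ u) v⟩

end Cylinder

section Subshift
variable {A : Type*} [TopologicalSpace A] {x u z : ℤ → A} {i : ℤ} {n : ℕ}

lemma self_mem_subshiftGen (x : ℤ → A) : x ∈ subshiftGen x :=
  subset_closure ⟨0, (shiftZ_zero x).symm⟩

lemma isShiftInvariant_subshiftGen (x : ℤ → A) : IsShiftInvariant (subshiftGen x) := by
  intro k u hu
  refine map_mem_closure (continuous_pi fun i => continuous_apply (i + k)) hu ?_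
  rintro _ ⟨j, rfl⟩
  exact ⟨k + j, shiftZ_shiftZ k j x⟩

lemma isCompact_subshiftGen [Finite A] (x : ℤ → A) : IsCompact (subshiftGen x) :=
  isClosed_closure.isCompact

variable [DiscreteTopology A]

lemma IsPeriodicSeq.mem_subshiftGen_of_eventuallyEq_atBot (hu : IsPeriodicSeq u)
    (h : u =ᶠ[atBot] x) : u ∈ subshiftGen x := by
  obtain ⟨P, hP, hPu : Periodic u P⟩ := hu
  refine mem_closure_of_tendsto (f := fun t : ℕ => shiftZ (-(t * P)) x) (b := atTop) ?_
    (Eventually.of_forall fun t => ⟨_, rfl⟩)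
  refine tendsto_pi_nhds.2 fun l => ?_
  rw [nhds_discrete, tendsto_pure]
  filter_upwards [h.comp_tendsto (tendsto_sub_mul_atBot l hP)] with t ht
  simpa [← sub_eq_add_neg, hPu.sub_nat_mul_eq] using ht.symm

lemma IsAnomalyOcc.removeBlock_mem_subshiftGen (h : IsAnomalyOcc x i n) :
    removeBlock x i n ∈ subshiftGen x :=
  h.2.mem_subshiftGen_of_eventuallyEq_atBot removeBlock_eventuallyEq_atBot

lemma IsAnomalyOcc.mem_subshiftGen_cases (h : IsAnomalyOcc x i n) (hz : z ∈ subshiftGen x) :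
    (∃ k, z = shiftZ k x) ∨ ∃ c, z = shiftZ c (removeBlock x i n) := by
  set p := removeBlock x i n
  by_cases hzp : z ∈ Set.range fun c => shiftZ c p
  · obtain ⟨c, hc⟩ := hzp
    exact Or.inr ⟨c, hc.symm⟩
  left
  -- A cylinder around `z` missing the finite orbit of `p` contains only shifts `σᵏ x` with `k`
  -- bounded: farther out, `σᵏ x` agrees with a shift of `p` on the whole window.
  obtain ⟨m, hm⟩ := exists_cylinder_subset
    (h.2.finite_range_shiftZ.isClosed.isOpen_compl.mem_nhds hzp)
  have hnear :
      cylinder z m ∩ seqOrbit x ⊆ (fun k => shiftZ k x) '' Set.Icc (i - m) (i + n + m) := by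
    rintro _ ⟨hw, k, rfl⟩
    rw [mem_cylinder] at hw
    refine ⟨k, ⟨?_, ?_⟩, rfl⟩
    · by_contra hk
      refine hm (mem_cylinder.2 fun l hl hl' => ?_) ⟨k, rfl⟩
      rw [← hw l hl hl']
      exact if_pos (by omega)
    · by_contra hk
      refine hm (mem_cylinder.2 fun l hl hl' => ?_) ⟨k - n, rfl⟩
      rw [← hw l hl hl']
      simp only [shiftZ_apply, removeBlock, if_neg (show ¬ l + (k - n) ≤ i by omega)]
      ring_nf
  have hzS := closure_mono hnear ((isOpen_cylinder z m).inter_closure ⟨mem_cylinder_self z m, hz⟩)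
  rw [((Set.finite_Icc _ _).image _).isClosed.closure_eq] at hzS
  obtain ⟨k, -, hk⟩ := hzS
  exact ⟨k, hk.symm⟩

lemma IsAnomalyOcc.exists_eq_shiftZ_removeBlock (h : IsAnomalyOcc x i n) (hx : ¬ IsPeriodicSeq x)
    (hz : z ∈ subshiftGen x) (hzp : IsPeriodicSeq z) : ∃ c, z = shiftZ c (removeBlock x i n) :=
  (h.mem_subshiftGen_cases hz).resolve_left fun ⟨_, hk⟩ =>
    hx (isPeriodicSeq_shiftZ_iff.1 (hk ▸ hzp))

lemma IsAnomalyOcc.exists_eq_shiftZ (h : IsAnomalyOcc x i n) (hz : z ∈ subshiftGen x)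
    (hzp : ¬ IsPeriodicSeq z) : ∃ k, z = shiftZ k x :=
  (h.mem_subshiftGen_cases hz).resolve_right fun ⟨_, hc⟩ =>
    hzp (hc ▸ isPeriodicSeq_shiftZ_iff.2 h.2)

end Subshift

section Equivariant
variable {A B : Type*} {X : Set (ℤ → A)} {Y : Set (ℤ → B)}

def IsShiftEquivariant (f : X → Y) : Prop :=
  ∀ (k : ℤ) (u : X) (hu : shiftZ k (u : ℤ → A) ∈ X), (f ⟨_, hu⟩ : ℤ → B) = shiftZ k (f u)

lemma isShiftEquivariant_of_shiftMap (hX : IsShiftInvariant X) {f : X → Y}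
    (hf : ∀ (u : ℤ → A) (hu : u ∈ X) (hu' : shiftMap u ∈ X),
      (f ⟨shiftMap u, hu'⟩ : ℤ → B) = shiftMap (f ⟨u, hu⟩ : ℤ → B)) :
    IsShiftEquivariant f := by
  have hstep (k : ℤ) (u : X) (hu : shiftZ (k + 1) (u : ℤ → A) ∈ X) :
      (f ⟨_, hu⟩ : ℤ → B) = shiftZ 1 (f ⟨_, hX k u u.2⟩) := by
    rw [← shiftMap_eq_shiftZ_one, ← hf _ _ (hX 1 _ (hX k u u.2))]
    simp only [shiftMap_eq_shiftZ_one, shiftZ_shiftZ, add_comm]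
  intro k
  induction k using Int.induction_on with
  | zero =>
    intro u hu
    simp only [shiftZ_zero]
  | succ k ih =>
    intro u hu
    rw [hstep, ih, shiftZ_shiftZ, add_comm]
  | pred k ih =>
    intro u hu
    apply shiftZ_injective 1
    have := hstep (-k - 1) u (by rw [sub_add_cancel]; exact hX _ u u.2)
    simp only [sub_add_cancel] at this
    rw [← this, ih, shiftZ_shiftZ, add_sub_cancel]

lemma IsShiftEquivariant.symm (hX : IsShiftInvariant X) {φ : X ≃ Y} (hφ : IsShiftEquivariant φ) :
    IsShiftEquivariant φ.symm := by
  intro k v hv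
  have hu := hX k _ (φ.symm v).2
  have : φ ⟨_, hu⟩ = ⟨shiftZ k v, hv⟩ := Subtype.ext (by rw [hφ, φ.apply_symm_apply])
  rw [← this, φ.symm_apply_apply]

lemma Conjugate.exists_isShiftEquivariant [TopologicalSpace A] [TopologicalSpace B]
    (hX : IsShiftInvariant X) (h : Conjugate X Y) :
    ∃ φ : X ≃ₜ Y, IsShiftEquivariant φ ∧ IsShiftEquivariant φ.symm := by
  obtain ⟨φ, hφ⟩ := h
  have hφ' : IsShiftEquivariant φ := isShiftEquivariant_of_shiftMap hX hφ
  exact ⟨φ, hφ', hφ'.symm (φ := φ.toEquiv) hX⟩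

lemma IsShiftEquivariant.periodic {f : X → Y} (hf : IsShiftEquivariant f) {u : X} {d : ℤ}
    (hu : Periodic (u : ℤ → A) d) : Periodic (f u : ℤ → B) d := by
  have hud : shiftZ d (u : ℤ → A) = u := shiftZ_eq_self_iff.2 hu
  rw [← shiftZ_eq_self_iff, ← hf d u (by rw [hud]; exact u.2)]
  congr

lemma IsShiftEquivariant.isPeriodicSeq {f : X → Y} (hf : IsShiftEquivariant f) {u : X}
    (hu : IsPeriodicSeq (u : ℤ → A)) : IsPeriodicSeq (f u : ℤ → B) :=
  let ⟨N, hN, hNu⟩ := hu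
  ⟨N, hN, hf.periodic hNu⟩

variable [TopologicalSpace A] [DiscreteTopology A] [TopologicalSpace B] [DiscreteTopology B]

lemma IsShiftEquivariant.exists_apply_eq_of_mem_cylinder (hX : IsShiftInvariant X)
    (hXc : IsCompact X) {f : X → Y} (hf : IsShiftEquivariant f) (hfc : Continuous f) :
    ∃ r : ℕ, ∀ (u v : X) (j : ℤ), shiftZ j (v : ℤ → A) ∈ cylinder (shiftZ j u) r →
      (f v : ℤ → B) j = (f u : ℤ → B) j := by
  obtain ⟨r, hr⟩ :=
    ((continuous_apply 0).comp (continuous_subtype_val.comp hfc)).exists_eq_of_mem_cylinder hXc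
  refine ⟨r, fun u v j hj => ?_⟩
  have h := hr ⟨_, hX j u u.2⟩ ⟨_, hX j v v.2⟩ hj
  simp only [Function.comp_apply] at h
  rw [hf j u, hf j v] at h
  simpa using h

lemma IsShiftEquivariant.eventuallyEq (hX : IsShiftInvariant X) (hXc : IsCompact X)
    {f : X → Y} (hf : IsShiftEquivariant f) (hfc : Continuous f) {l : Filter ℤ}
    (hl : ∀ k, Tendsto (· + k) l l) {u v : X} (h : (u : ℤ → A) =ᶠ[l] v) :
    (f u : ℤ → B) =ᶠ[l] f v := by
  obtain ⟨r, hr⟩ := hf.exists_apply_eq_of_mem_cylinder hX hXc hfc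
  have hwindow :
      ∀ᶠ j in l, ∀ k ∈ Set.Icc (-(r : ℤ)) r, (u : ℤ → A) (j + k) = (v : ℤ → A) (j + k) :=
    (eventually_all_finite (Set.finite_Icc _ _)).2 fun k _ => h.comp_tendsto (hl k)
  filter_upwards [hwindow] with j hj
  refine (hr u v j (mem_cylinder.2 fun k hk hk' => ?_)).symm
  simpa [add_comm] using (hj k ⟨hk, hk'⟩).symm

end Equivariant

section Conjugacy
variable {A B : Type*} [TopologicalSpace A] [DiscreteTopology A] [TopologicalSpace B]
  [DiscreteTopology B] {x : ℤ → A} {y : ℤ → B} {i₁ i₂ : ℤ} {n₁ n₂ : ℕ}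

lemma IsShiftEquivariant.exists_map_removeBlock_eq {f : subshiftGen x → subshiftGen y}
    (hf : IsShiftEquivariant f) (hy : ¬ IsPeriodicSeq y) (h₁ : IsAnomalyOcc x i₁ n₁)
    (h₂ : IsAnomalyOcc y i₂ n₂) :
    ∃ b, (f ⟨_, h₁.removeBlock_mem_subshiftGen⟩ : ℤ → B) = shiftZ b (removeBlock y i₂ n₂) :=
  h₂.exists_eq_shiftZ_removeBlock hy (f _).2 (hf.isPeriodicSeq h₁.2)

lemma IsShiftEquivariant.leastPer_dvd {f : subshiftGen x → subshiftGen y}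
    (hf : IsShiftEquivariant f) (hy : ¬ IsPeriodicSeq y) (h₁ : IsAnomalyOcc x i₁ n₁)
    (h₂ : IsAnomalyOcc y i₂ n₂) :
    leastPer (removeBlock y i₂ n₂) ∣ leastPer (removeBlock x i₁ n₁) := by
  obtain ⟨b, hb⟩ := hf.exists_map_removeBlock_eq hy h₁ h₂
  have hper := hf.periodic (u := ⟨_, h₁.removeBlock_mem_subshiftGen⟩)
    h₁.2.isPeriodicWith_leastPer.2
  rw [hb, periodic_shiftZ_iff] at hper
  exact Int.natCast_dvd_natCast.1 (h₂.2.leastPer_dvd hper)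

/-- With `p`, `q` the periodic parts, `φ x = σᵃ y` and `φ p = σᵇ q`; agreement far to the left
gives `a ≡ b` and far to the right `a - n₂ ≡ b - n₁`, modulo the period of `q`. -/
lemma IsShiftEquivariant.leastPer_dvd_sub [Finite A] {φ : subshiftGen x ≃ₜ subshiftGen y}
    (hφ : IsShiftEquivariant φ) (hφ' : IsShiftEquivariant φ.symm) (hx : ¬ IsPeriodicSeq x)
    (hy : ¬ IsPeriodicSeq y) (h₁ : IsAnomalyOcc x i₁ n₁) (h₂ : IsAnomalyOcc y i₂ n₂) :
    (leastPer (removeBlock y i₂ n₂) : ℤ) ∣ n₂ - n₁ := by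
  set p := removeBlock x i₁ n₁
  set q := removeBlock y i₂ n₂
  have hXinv := isShiftInvariant_subshiftGen x
  have hXc := isCompact_subshiftGen x
  have hXx := self_mem_subshiftGen x
  have hXp : p ∈ subshiftGen x := h₁.removeBlock_mem_subshiftGen
  obtain ⟨b, hb⟩ := hφ.exists_map_removeBlock_eq hy h₁ h₂
  obtain ⟨a, ha⟩ : ∃ a, (φ ⟨x, hXx⟩ : ℤ → B) = shiftZ a y := by
    refine h₂.exists_eq_shiftZ (φ _).2 fun hper => hx ?_
    simpa using hφ'.isPeriodicSeq hper
  have hbot (k : ℤ) : Tendsto (· + k) atBot atBot := tendsto_atBot_add_const_right _ k tendsto_id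
  have htop (k : ℤ) : Tendsto (· + k) atTop atTop := tendsto_atTop_add_const_right _ k tendsto_id
  have hq (k : ℤ) : IsPeriodicSeq (shiftZ k q) := isPeriodicSeq_shiftZ_iff.2 h₂.2
  have hleft : shiftZ a q = shiftZ b q := by
    refine (hq a).eq_of_eventuallyEq_atBot (hq b) ?_
    calc shiftZ a q
        =ᶠ[atBot] shiftZ a y := removeBlock_eventuallyEq_atBot.shiftZ a (hbot a)
      _ = φ ⟨x, hXx⟩ := ha.symm
      _ =ᶠ[atBot] φ ⟨p, hXp⟩ :=
        hφ.eventuallyEq hXinv hXc φ.continuous hbot removeBlock_eventuallyEq_atBot.symm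
      _ = shiftZ b q := hb
  have hright : shiftZ (a - n₂) q = shiftZ (b - n₁) q := by
    refine (hq _).eq_of_eventuallyEq_atTop (hq _) ?_
    calc shiftZ (a - n₂) q
        = shiftZ a (shiftZ (-n₂) q) := by rw [shiftZ_shiftZ, sub_eq_add_neg]
      _ =ᶠ[atTop] shiftZ a y := shiftZ_removeBlock_eventuallyEq_atTop.shiftZ a (htop a)
      _ = φ ⟨x, hXx⟩ := ha.symm
      _ =ᶠ[atTop] φ ⟨_, hXinv (-n₁) p hXp⟩ :=
        hφ.eventuallyEq hXinv hXc φ.continuous htop shiftZ_removeBlock_eventuallyEq_atTop.symm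
      _ = shiftZ (b - n₁) q := by rw [hφ (-n₁) ⟨p, hXp⟩, hb, shiftZ_shiftZ, neg_add_eq_sub]
  rw [shiftZ_eq_shiftZ_iff] at hleft hright
  convert h₂.2.leastPer_dvd (hright.sub_period hleft) using 1
  ring

end Conjugacy

theorem stmt_2_general {A B : Type*} [Fintype A]
    [TopologicalSpace A] [DiscreteTopology A] [TopologicalSpace B] [DiscreteTopology B]
    (x : ℤ → A) (y : ℤ → B) (hx : EventuallyPeriodic x) (hy : EventuallyPeriodic y)
    (N M : ℕ) (hN : evLeastPeriod x = N) (hM : evLeastPeriod y = M)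
    (h : Conjugate (subshiftGen x) (subshiftGen y)) :
    M = N ∧ anomalySize x ≡ anomalySize y [MOD N] := by
  obtain ⟨φ, hφ, hφ'⟩ := h.exists_isShiftEquivariant (isShiftInvariant_subshiftGen x)
  obtain ⟨i₁, h₁⟩ := hx.exists_isAnomalyOcc_anomalySize
  obtain ⟨i₂, h₂⟩ := hy.exists_isAnomalyOcc_anomalySize
  rw [h₁.evLeastPeriod_eq] at hN
  rw [h₂.evLeastPeriod_eq] at hM
  have hMN : M = N := hM ▸ hN ▸
    Nat.dvd_antisymm (hφ.leastPer_dvd hy.1 h₁ h₂) (hφ'.leastPer_dvd hx.1 h₂ h₁)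
  refine ⟨hMN, Nat.modEq_iff_dvd.2 ?_⟩
  rw [← hMN, ← hM]
  exact hφ.leastPer_dvd_sub hφ' hx.1 hy.1 h₁ h₂

/-- If the subshifts generated by eventually periodic sequences `x`, `y`
(with least periods `N`, `M`) are conjugate, then `M = N` and `a(x) ≡ a(y) (mod N)`. -/
theorem stmt_2 {A B : Type*} [Fintype A] [Fintype B]
    [TopologicalSpace A] [DiscreteTopology A] [TopologicalSpace B] [DiscreteTopology B]
    (x : ℤ → A) (y : ℤ → B) (hx : EventuallyPeriodic x) (hy : EventuallyPeriodic y)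
    (N M : ℕ) (hN : evLeastPeriod x = N) (hM : evLeastPeriod y = M)
    (h : Conjugate (subshiftGen x) (subshiftGen y)) :
    M = N ∧ anomalySize x ≡ anomalySize y [MOD N] :=
  stmt_2_general x y hx hy N M hN hM h
end

section
/- Let p and q be relatively prime positive integers, let (a,b) be the restricted Bézout coefficients of (q,p), and let z_n be the cell lengths used to define S(0,q/p). Then z_0 + z_1 + ⋯ + z_{b−1} = a; equivalently, the chain of cells B_0⋯B_{b−1} of S(0,q/p) consists of exactly a+b symbols, of which exactly a are 0's. -/
open Classical

/-! With `β = p/q`, the cell `B_j` (`j ≥ 0`) has one `0` for each `k` with `k β ∈ (0, 1)` if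
`j = 0`, resp. `k β ∈ [j, j + 1)` if `j > 0`. So `z_0 + ⋯ + z_{b-1}` counts the `k` with
`0 < k p < b q = a p + 1`, which are `k = 1, …, a`. -/

lemma intCast_lt_mul_div_iff {q : ℤ} (hq : 0 < q) (p m k : ℤ) :
    (m : ℚ) < k * (p / q) ↔ m * q < k * p := by
  rw [mul_div_assoc', lt_div_iff₀ (by exact_mod_cast hq)]
  exact_mod_cast Iff.rfl

lemma intCast_le_mul_div_iff {q : ℤ} (hq : 0 < q) (p m k : ℤ) :
    (m : ℚ) ≤ k * (p / q) ↔ m * q ≤ k * p := by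
  rw [mul_div_assoc', le_div_iff₀ (by exact_mod_cast hq)]
  exact_mod_cast Iff.rfl

lemma mul_div_lt_intCast_iff {q : ℤ} (hq : 0 < q) (p m k : ℤ) :
    (k : ℚ) * (p / q) < m ↔ k * p < m * q := by
  rw [mul_div_assoc', div_lt_iff₀ (by exact_mod_cast hq)]
  exact_mod_cast Iff.rfl

section CellLengths

variable {p q : ℤ}

lemma cellLenS_eq_ncard (hq : 0 < q) {n : ℤ} (hn : 0 ≤ n) :
    cellLenS p q n = {k : ℤ | 0 < k * p ∧ n * q ≤ k * p ∧ k * p < (n + 1) * q}.ncard := by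
  rcases hn.eq_or_lt with rfl | hn
  · simp only [cellLenS, lt_irrefl, if_false, if_true, zero_mul, zero_add, one_mul]
    congr 1
    ext k
    have h := and_congr (intCast_lt_mul_div_iff hq p 0 k) (mul_div_lt_intCast_iff hq p 1 k)
    push_cast at h
    simp only [Set.mem_ofPred_eq, h, zero_mul, one_mul]
    exact ⟨fun h => ⟨h.1, h.1.le, h.2⟩, fun h => ⟨h.1, h.2.2⟩⟩
  · simp only [cellLenS, hn.not_gt, hn.ne', if_false]
    congr 1
    ext k
    have hnq : 0 < n * q := mul_pos hn hq
    have h := and_congr (intCast_le_mul_div_iff hq p n k)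
      (mul_div_lt_intCast_iff hq p (n + 1) k)
    push_cast at h
    simp only [Set.mem_ofPred_eq, h]
    exact ⟨fun h => ⟨hnq.trans_le h.1, h⟩, fun h => h.2⟩

lemma finite_setOf_pos_mul_lt (hp : 0 < p) (m : ℤ) : {k : ℤ | 0 < k * p ∧ k * p < m}.Finite :=
  (Set.finite_Ioo 0 m).subset fun _ ⟨hk, hkm⟩ =>
    have hk' := pos_of_mul_pos_left hk hp.le
    ⟨hk', (le_mul_of_one_le_right hk'.le hp).trans_lt hkm⟩

lemma sum_cellLenS_eq_ncard (hp : 0 < p) (hq : 0 < q) {n : ℤ} (hn : 0 ≤ n) :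
    ∑ j ∈ Finset.Ico 0 n, (cellLenS p q j : ℤ) =
      {k : ℤ | 0 < k * p ∧ k * p < n * q}.ncard := by
  induction n, hn using Int.leInduction with
  | base =>
    have hempty : {k : ℤ | 0 < k * p ∧ k * p < 0} = ∅ :=
      Set.eq_empty_of_forall_notMem fun _ h => lt_asymm h.1 h.2
    rw [Finset.Ico_self, Finset.sum_empty, zero_mul, hempty, Set.ncard_empty, Nat.cast_zero]
  | succ n hn ih =>
    have hsplit : {k : ℤ | 0 < k * p ∧ k * p < (n + 1) * q} =
        {k : ℤ | 0 < k * p ∧ k * p < n * q} ∪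
          {k : ℤ | 0 < k * p ∧ n * q ≤ k * p ∧ k * p < (n + 1) * q} := by
      ext k
      simp only [Set.mem_ofPred_eq, Set.mem_union]
      constructor
      · rintro ⟨h0, h1⟩
        by_cases h : k * p < n * q
        exacts [Or.inl ⟨h0, h⟩, Or.inr ⟨h0, not_lt.mp h, h1⟩]
      · rintro (⟨h0, h1⟩ | ⟨h0, -, h1⟩)
        exacts [⟨h0, h1.trans_le (by linarith)⟩, ⟨h0, h1⟩]
    have hdisj : Disjoint {k : ℤ | 0 < k * p ∧ k * p < n * q}
        {k : ℤ | 0 < k * p ∧ n * q ≤ k * p ∧ k * p < (n + 1) * q} :=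
      Set.disjoint_left.mpr fun k h1 h2 => h2.2.1.not_gt h1.2
    rw [← Finset.insert_Ico_right_eq_Ico_add_one hn, Finset.sum_insert Finset.right_notMem_Ico,
      ih, cellLenS_eq_ncard hq hn, hsplit,
      Set.ncard_union_eq hdisj (finite_setOf_pos_mul_lt hp _)
        ((finite_setOf_pos_mul_lt hp ((n + 1) * q)).subset fun k h => ⟨h.1, h.2.2⟩)]
    push_cast
    ring

end CellLengths

theorem stmt_10_general (p q : ℤ) (hp : 0 < p) (hq : 0 < q)
    (a b : ℤ) (ha : 0 ≤ a) (hb : 0 < b)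
    (hab : b * q - a * p = 1) :
    (∑ j ∈ Finset.Ico (0 : ℤ) b, (cellLenS p q j : ℤ)) = a ∧
      cellStart (cellLenS p q) b = a + b := by
  have hcells : {k : ℤ | 0 < k * p ∧ k * p < b * q} = Set.Ioc 0 a := by
    ext k
    simp only [Set.mem_ofPred_eq, Set.mem_Ioc, mul_pos_iff_of_pos_right hp,
      show b * q = a * p + 1 by omega, Int.lt_add_one_iff, mul_le_mul_iff_left₀ hp]
  have hsum : ∑ j ∈ Finset.Ico 0 b, (cellLenS p q j : ℤ) = a := by
    rw [sum_cellLenS_eq_ncard hp hq hb.le, hcells, ← Finset.coe_Ioc, Set.ncard_coe_finset,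
      Int.card_Ioc, sub_zero, Int.toNat_of_nonneg ha]
  refine ⟨hsum, ?_⟩
  rw [cellStart, if_pos hb.le, hsum, add_comm]

/-- With `(a,b)` the restricted Bézout coefficients of `(q,p)`, the cell
lengths of `S(0,q/p)` satisfy `z_0 + ⋯ + z_{b-1} = a`; equivalently, the chain
`B_0 ⋯ B_{b-1}` consists of `a + b` symbols (its `1`s start at positions `L_0 = 0` and
the next cell starts at `L_b = a + b`), of which exactly `a` are `0`s. -/
theorem stmt_10 (p q : ℤ) (hp : 0 < p) (hq : 0 < q) (hpq : IsCoprime p q)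
    (a b : ℤ) (ha : 0 ≤ a) (ha' : a < q) (hb : 0 < b) (hb' : b ≤ p)
    (hab : b * q - a * p = 1) :
    (∑ j ∈ Finset.Ico (0 : ℤ) b, (cellLenS p q j : ℤ)) = a ∧
      cellStart (cellLenS p q) b = a + b :=
  stmt_10_general p q hp hq a b ha hb hab
end
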